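/- Let i₁, …, i_{2n} ∈ {1,2} be row indices which are not all equal, and let σ be any permutation of {1,…,2n}. Then |E*(E_{i₁ σ(1)}, E_{i₂ σ(2)}, …, E_{i_{2n} σ(2n)})| < (2n)!. -/
import Mathlib


/- STATEMENT 10: If the row indices i₁,…,i_{2n} ∈ {1,2} are not all equal, then for any
permutation σ of the columns, `|E*(E_{i₁σ(1)}, …, E_{i_{2n}σ(2n)})| < (2n)!`. (0-indexed.) -/

/-- `Ω* k l (X, Y) = ∑_{i=1}^{2} (X_{ik} Y_{il} − X_{il} Y_{ik})`. -/
noncomputable def Omst (n : ℕ) (k l : Fin (2 * n)) (X Y : Fin 2 → Fin (2 * n) → ℝ) : ℝ :=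
  ∑ i : Fin 2, (X i k * Y i l - X i l * Y i k)

/-- `E*(v₁,…,v_{2n}) = ∑_σ sgn σ (Ω*_{σ(1)σ(2)} ∧ ⋯ ∧ Ω*_{σ(2n−1)σ(2n)})(v₁,…,v_{2n})`. -/
noncomputable def Estar (n : ℕ) (v : Fin (2 * n) → (Fin 2 → Fin (2 * n) → ℝ)) : ℝ :=
  ∑ σ : Equiv.Perm (Fin (2 * n)), ((Equiv.Perm.sign σ : ℤ) : ℝ) *
    ((1 / 2 ^ n : ℝ) * ∑ τ : Equiv.Perm (Fin (2 * n)), ((Equiv.Perm.sign τ : ℤ) : ℝ) *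
      ∏ j : Fin n,
        Omst n (σ ⟨2 * j.1, by have := j.isLt; omega⟩) (σ ⟨2 * j.1 + 1, by have := j.isLt; omega⟩)
          (v (τ ⟨2 * j.1, by have := j.isLt; omega⟩)) (v (τ ⟨2 * j.1 + 1, by have := j.isLt; omega⟩)))


/-- standard basis matrix `E i k`. -/
noncomputable def Emat (n : ℕ) (i : Fin 2) (k : Fin (2 * n)) : Fin 2 → Fin (2 * n) → ℝ :=
  fun a b => if a = i ∧ b = k then 1 else 0

lemma omst_emat (n : ℕ) (k l : Fin (2*n)) (a b : Fin 2) (p q : Fin (2*n)) :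
    Omst n k l (Emat n a p) (Emat n b q) =
      if a = b then ((if p = k ∧ q = l then (1:ℝ) else 0) - if p = l ∧ q = k then 1 else 0)
      else 0 := by
  simp only [Omst, Emat, Fin.sum_univ_two]
  fin_cases a <;> fin_cases b <;> simp <;>
    simp_all [@eq_comm (Fin (2*n)) p, @eq_comm (Fin (2*n)) q] <;> split_ifs <;> simp_all

lemma omst_abs_le (n : ℕ) (k l : Fin (2*n)) (a b : Fin 2) (p q : Fin (2*n)) :
    |Omst n k l (Emat n a p) (Emat n b q)| ≤ 1 := by
  rw [omst_emat]; split_ifs <;> norm_num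

lemma omst_row (n : ℕ) (k l : Fin (2*n)) (a b : Fin 2) (p q : Fin (2*n))
    (h : Omst n k l (Emat n a p) (Emat n b q) ≠ 0) : a = b := by
  rw [omst_emat] at h; by_contra hab; simp [hab] at h

lemma omst_cases (n : ℕ) (k l : Fin (2*n)) (a b : Fin 2) (p q : Fin (2*n))
    (h : Omst n k l (Emat n a p) (Emat n b q) ≠ 0) :
    (p = k ∧ q = l) ∨ (p = l ∧ q = k) := by
  rw [omst_emat] at h
  by_cases h1 : p = k ∧ q = l
  · tauto
  by_cases h2 : p = l ∧ q = k
  · tauto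
  exfalso; apply h; split_ifs <;> norm_num

def pr0 (n : ℕ) (j : Fin n) : Fin (2*n) := ⟨2*j.1, by have := j.isLt; omega⟩
def pr1 (n : ℕ) (j : Fin n) : Fin (2*n) := ⟨2*j.1+1, by have := j.isLt; omega⟩

lemma pr_ne (n : ℕ) (j : Fin n) : pr0 n j ≠ pr1 n j := by
  simp [pr0, pr1, Fin.ext_iff]

theorem stmt_10 (n : ℕ) (hn : 1 ≤ n) (i : Fin (2 * n) → Fin 2)
    (hi : ∃ a b, i a ≠ i b) (σ : Equiv.Perm (Fin (2 * n))) :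
    |Estar n (fun a => Emat n (i a) (σ a))| < (Nat.factorial (2 * n) : ℝ) := by
  classical
  obtain ⟨a, b, hab⟩ := hi
  set P : Equiv.Perm (Fin (2*n)) → Equiv.Perm (Fin (2*n)) → ℝ := fun ρ τ =>
    ∏ j : Fin n, Omst n (ρ (pr0 n j)) (ρ (pr1 n j))
      (Emat n (i (τ (pr0 n j))) (σ (τ (pr0 n j))))
      (Emat n (i (τ (pr1 n j))) (σ (τ (pr1 n j)))) with hP
  have hE : Estar n (fun a => Emat n (i a) (σ a)) =
      ∑ ρ : Equiv.Perm (Fin (2*n)), ((Equiv.Perm.sign ρ : ℤ) : ℝ) *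
        ((1 / 2 ^ n : ℝ) * ∑ τ : Equiv.Perm (Fin (2*n)),
          ((Equiv.Perm.sign τ : ℤ) : ℝ) * P ρ τ) := rfl
  have hsgn : ∀ ρ : Equiv.Perm (Fin (2*n)), |((Equiv.Perm.sign ρ : ℤ) : ℝ)| = 1 := by
    intro ρ; rcases Int.units_eq_one_or (Equiv.Perm.sign ρ) with h | h <;> rw [h] <;> norm_num
  have habsP : ∀ ρ τ, |P ρ τ| ≤ 1 := by
    intro ρ τ
    rw [hP]
    calc |∏ j : Fin n, _| = ∏ j : Fin n, |Omst n (ρ (pr0 n j)) (ρ (pr1 n j))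
          (Emat n (i (τ (pr0 n j))) (σ (τ (pr0 n j))))
          (Emat n (i (τ (pr1 n j))) (σ (τ (pr1 n j))))| := Finset.abs_prod _ _
      _ ≤ ∏ _j : Fin n, (1:ℝ) :=
          Finset.prod_le_prod (fun j _ => abs_nonneg _) (fun j _ => omst_abs_le ..)
      _ = 1 := Finset.prod_const_one
  set cond : Equiv.Perm (Fin (2*n)) → Prop :=
    fun τ => ∀ j : Fin n, i (τ (pr0 n j)) = i (τ (pr1 n j)) with hcond
  -- key per-τ bound
  have key : ∀ τ : Equiv.Perm (Fin (2*n)),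
      ∑ ρ : Equiv.Perm (Fin (2*n)), |P ρ τ| ≤ if cond τ then (2^n : ℝ) else 0 := by
    intro τ
    by_cases hc : cond τ
    · rw [if_pos hc]
      set S : Finset (Equiv.Perm (Fin (2*n))) :=
        Finset.univ.filter (fun ρ => P ρ τ ≠ 0) with hS
      have hsum : ∑ ρ : Equiv.Perm (Fin (2*n)), |P ρ τ| = ∑ ρ ∈ S, |P ρ τ| := by
        refine (Finset.sum_subset (Finset.subset_univ S) ?_).symm
        intro ρ _ hρ
        simp only [hS, Finset.mem_filter, Finset.mem_univ, true_and, not_not] at hρ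
        simp [hρ]
      have hdet : ∀ ρ, P ρ τ ≠ 0 → ∀ j : Fin n,
          (ρ (pr0 n j) = σ (τ (pr0 n j)) ∧ ρ (pr1 n j) = σ (τ (pr1 n j))) ∨
          (ρ (pr0 n j) = σ (τ (pr1 n j)) ∧ ρ (pr1 n j) = σ (τ (pr0 n j))) := by
        intro ρ hρ j
        have hfac : Omst n (ρ (pr0 n j)) (ρ (pr1 n j))
            (Emat n (i (τ (pr0 n j))) (σ (τ (pr0 n j))))
            (Emat n (i (τ (pr1 n j))) (σ (τ (pr1 n j)))) ≠ 0 := by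
          intro h0
          exact hρ (Finset.prod_eq_zero (Finset.mem_univ j) h0)
        rcases omst_cases n _ _ _ _ _ _ hfac with ⟨h1, h2⟩ | ⟨h1, h2⟩
        · exact Or.inl ⟨h1.symm, h2.symm⟩
        · exact Or.inr ⟨h2.symm, h1.symm⟩
      have hcard : S.card ≤ 2 ^ n := by
        have hinj : Set.InjOn
            (fun (ρ : Equiv.Perm (Fin (2*n))) (j : Fin n) =>
              decide (ρ (pr0 n j) = σ (τ (pr0 n j))))
            (↑S : Set (Equiv.Perm (Fin (2*n)))) := ?_
        · have := Finset.card_le_card_of_injOn _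
            (fun ρ _ => Finset.mem_univ (fun j : Fin n => decide (ρ (pr0 n j) = σ (τ (pr0 n j))))) hinj
          simpa using this
        intro ρ hρ ρ' hρ' hff
        simp only [hS, Finset.mem_coe, Finset.mem_filter, Finset.mem_univ, true_and] at hρ hρ'
        have hpq : ∀ j : Fin n, σ (τ (pr0 n j)) ≠ σ (τ (pr1 n j)) := fun j h =>
          pr_ne n j (τ.injective (σ.injective h))
        have hagree : ∀ j : Fin n,
            ρ (pr0 n j) = ρ' (pr0 n j) ∧ ρ (pr1 n j) = ρ' (pr1 n j) := by
          intro j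
          have hj := congrFun hff j
          simp only [decide_eq_decide] at hj
          rcases hdet ρ hρ j with ⟨h1, h2⟩ | ⟨h1, h2⟩ <;>
            rcases hdet ρ' hρ' j with ⟨h1', h2'⟩ | ⟨h1', h2'⟩
          · exact ⟨h1.trans h1'.symm, h2.trans h2'.symm⟩
          · exact absurd ((hj.mp h1).symm.trans h1') (hpq j)
          · exact absurd ((hj.mpr h1').symm.trans h1) (hpq j)
          · exact ⟨h1.trans h1'.symm, h2.trans h2'.symm⟩
        ext x
        have hx := x.isLt
        have hxlt : x.1 / 2 < n := by omega
        by_cases hpar : x.1 % 2 = 0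
        · have hx0 : x = pr0 n ⟨x.1 / 2, hxlt⟩ := by
            simp only [pr0, Fin.ext_iff]; omega
          rw [hx0]; exact congrArg Fin.val (hagree ⟨x.1 / 2, hxlt⟩).1
        · have hx1 : x = pr1 n ⟨x.1 / 2, hxlt⟩ := by
            simp only [pr1, Fin.ext_iff]; omega
          rw [hx1]; exact congrArg Fin.val (hagree ⟨x.1 / 2, hxlt⟩).2
      calc ∑ ρ : Equiv.Perm (Fin (2*n)), |P ρ τ| = ∑ ρ ∈ S, |P ρ τ| := hsum
        _ ≤ ∑ _ρ ∈ S, (1:ℝ) := Finset.sum_le_sum (fun ρ _ => habsP ρ τ)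
        _ = S.card := by simp
        _ ≤ 2 ^ n := by exact_mod_cast hcard
    · rw [if_neg hc]
      simp only [hcond] at hc
      push_neg at hc
      obtain ⟨j0, hj0⟩ := hc
      have hz : ∀ ρ, P ρ τ = 0 := by
        intro ρ
        refine Finset.prod_eq_zero (Finset.mem_univ j0) ?_
        by_contra h0
        exact hj0 (omst_row n _ _ _ _ _ _ h0)
      simp [hz]
  -- the bad τ
  have hane : a ≠ b := fun h => hab (by rw [h])
  set z0 : Fin (2*n) := pr0 n ⟨0, by omega⟩ with hz0
  set z1 : Fin (2*n) := pr1 n ⟨0, by omega⟩ with hz1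
  have hz01 : z0 ≠ z1 := pr_ne n _
  set t1 : Equiv.Perm (Fin (2*n)) := Equiv.swap z0 a with ht1
  set b' : Fin (2*n) := t1.symm b with hb'
  have hb'z0 : b' ≠ z0 := by
    intro h
    apply hane
    have h2 : t1 b' = b := by simp [hb']
    rw [h, ht1, Equiv.swap_apply_left] at h2
    exact h2
  set τbad : Equiv.Perm (Fin (2*n)) := (Equiv.swap z1 b').trans t1 with hτbad
  have hτ0 : τbad z0 = a := by
    simp only [hτbad, Equiv.trans_apply]
    rw [Equiv.swap_apply_of_ne_of_ne hz01 (Ne.symm hb'z0)]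
    simp [ht1, Equiv.swap_apply_left]
  have hτ1 : τbad z1 = b := by
    simp only [hτbad, Equiv.trans_apply, Equiv.swap_apply_left]
    simp [hb']
  have hbadcond : ¬ cond τbad := by
    intro h
    have := h ⟨0, by omega⟩
    rw [← hz0, ← hz1, hτ0, hτ1] at this
    exact hab this
  -- counting
  set C : ℕ := (Finset.univ.filter cond).card with hC
  have hCle : C ≤ Nat.factorial (2*n) - 1 := by
    have hsub : Finset.univ.filter cond ⊆ Finset.univ.erase τbad := by
      intro x hx
      rw [Finset.mem_erase]
      refine ⟨?_, Finset.mem_univ _⟩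
      intro h
      exact hbadcond (h ▸ (Finset.mem_filter.mp hx).2)
    have := Finset.card_le_card hsub
    rwa [Finset.card_erase_of_mem (Finset.mem_univ _), Finset.card_univ,
      Fintype.card_perm, Fintype.card_fin] at this
  have hfact1 : 1 ≤ Nat.factorial (2*n) := Nat.one_le_iff_ne_zero.mpr (Nat.factorial_ne_zero _)
  -- assemble
  have step1 : |Estar n (fun a => Emat n (i a) (σ a))| ≤
      ∑ ρ : Equiv.Perm (Fin (2*n)), (1/2^n : ℝ) * ∑ τ : Equiv.Perm (Fin (2*n)), |P ρ τ| := by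
    rw [hE]
    refine (Finset.abs_sum_le_sum_abs _ _).trans (Finset.sum_le_sum ?_)
    intro ρ _
    rw [abs_mul, hsgn, one_mul, abs_mul, abs_of_pos (by positivity : (0:ℝ) < 1/2^n)]
    gcongr
    refine (Finset.abs_sum_le_sum_abs _ _).trans (le_of_eq ?_)
    refine Finset.sum_congr rfl (fun τ _ => ?_)
    rw [abs_mul, hsgn, one_mul]
  have step2 : ∑ ρ : Equiv.Perm (Fin (2*n)), (1/2^n:ℝ) * ∑ τ : Equiv.Perm (Fin (2*n)), |P ρ τ|
      = (1/2^n : ℝ) * ∑ τ : Equiv.Perm (Fin (2*n)), ∑ ρ : Equiv.Perm (Fin (2*n)), |P ρ τ| := by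
    rw [← Finset.mul_sum, Finset.sum_comm]
  have step3 : ∑ τ : Equiv.Perm (Fin (2*n)), ∑ ρ : Equiv.Perm (Fin (2*n)), |P ρ τ|
      ≤ ∑ τ : Equiv.Perm (Fin (2*n)), (if cond τ then (2^n:ℝ) else 0) :=
    Finset.sum_le_sum (fun τ _ => key τ)
  have step4 : ∑ τ : Equiv.Perm (Fin (2*n)), (if cond τ then (2^n:ℝ) else 0)
      = (C : ℝ) * 2^n := by
    rw [Finset.sum_ite, Finset.sum_const, Finset.sum_const_zero, add_zero, nsmul_eq_mul, hC]
  have hfinal : |Estar n (fun a => Emat n (i a) (σ a))| ≤ (C : ℝ) := by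
    refine step1.trans ?_
    rw [step2]
    calc (1/2^n : ℝ) * ∑ τ : Equiv.Perm (Fin (2*n)), ∑ ρ : Equiv.Perm (Fin (2*n)), |P ρ τ|
        ≤ (1/2^n : ℝ) * ((C:ℝ) * 2^n) :=
          mul_le_mul_of_nonneg_left (step3.trans (le_of_eq step4)) (by positivity)
      _ = (C : ℝ) := by field_simp
  refine hfinal.trans_lt ?_
  have : C < Nat.factorial (2*n) := by omega
  exact_mod_cast this
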